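/- arXiv:2210.02717 — 4 statements merged into one kernel-verified Lean document; each statement's English description precedes it below -/
import Mathlib

section
/- Let f : ℝ → ℝ be a bounded continuous function on [0, ∞). Then for every x > 0, the Szász-type operator value S_u(x) = e^{−u x} · Σ_{k=0}^{∞} f(k/u) · (u x)^k / k! converges to f(x) as u → ∞. (Equivalently, writing S_u(x) = Σ_{k=0}^{∞} (1/u) f(k/u) · u^{k+1} x^k e^{−u x} / k!, an arbitrary bounded continuous function on (0, ∞) is the limit of mixtures of Gamma densities with rate u and shapes k+1 and weights (1/u) f(k/u).) -/
open Real Filter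

/-!
Write `S_u f(x) = ∑ₖ f(k/u) pₖ` with the Poisson weights `pₖ = e^{-ux} (ux)^k / k!`. These are
nonnegative, sum to `1`, and the nodes `k/u` have mean `x` and variance `x/u`. Given `ε` and the
`δ` of continuity of `f` at `x`, a bounded `f` satisfies
`|f y - f x| ≤ ε + 2C/δ² · (y - x)²` for all `y ≥ 0`; averaging against the weights gives
`|S_u f(x) - f x| ≤ ε + 2C/δ² · x/u`, which is `< 2ε` for large `u`.
-/

noncomputable def poissonWeight (t : ℝ) (n : ℕ) : ℝ := exp (-t) * t ^ n / n.factorial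

theorem poissonWeight_nonneg {t : ℝ} (ht : 0 ≤ t) (n : ℕ) : 0 ≤ poissonWeight t n := by
  unfold poissonWeight; positivity

theorem hasSum_poissonWeight (t : ℝ) : HasSum (poissonWeight t) 1 := by
  convert! (NormedSpace.expSeries_div_hasSum_exp t).mul_left (exp (-t)) using 1
  · ext n; simp only [poissonWeight, mul_div_assoc]
  · rw [← Real.exp_eq_exp_ℝ, ← Real.exp_add, neg_add_cancel, Real.exp_zero]

theorem natCast_succ_mul_poissonWeight_succ (t : ℝ) (n : ℕ) :
    ((n + 1 : ℕ) : ℝ) * poissonWeight t (n + 1) = t * poissonWeight t n := by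
  simp only [poissonWeight, Nat.factorial_succ]
  push_cast
  field_simp
  ring

/-- The Stein–Chen identity `E[N g(N)] = t E[g(N + 1)]` for `N` Poisson of mean `t`. -/
theorem HasSum.natCast_mul_mul_poissonWeight {t a : ℝ} {g : ℕ → ℝ}
    (h : HasSum (fun n ↦ g (n + 1) * poissonWeight t n) a) :
    HasSum (fun n ↦ n * g n * poissonWeight t n) (t * a) := by
  refine (hasSum_nat_add_iff' 1).mp ?_
  convert! h.mul_left t using 1
  · ext n
    rw [mul_right_comm, natCast_succ_mul_poissonWeight_succ]
    ring
  · simp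

theorem hasSum_natCast_mul_poissonWeight (t : ℝ) :
    HasSum (fun n : ℕ ↦ (n : ℝ) * poissonWeight t n) t := by
  have h := HasSum.natCast_mul_mul_poissonWeight (g := fun _ ↦ 1)
    (by simpa only [one_mul] using hasSum_poissonWeight t)
  simpa only [mul_one] using h

theorem hasSum_natCast_sq_mul_poissonWeight (t : ℝ) :
    HasSum (fun n : ℕ ↦ (n : ℝ) ^ 2 * poissonWeight t n) (t ^ 2 + t) := by
  have h : HasSum (fun n ↦ ((n + 1 : ℕ) : ℝ) * poissonWeight t n) (t + 1) := by
    simpa [add_mul] using (hasSum_natCast_mul_poissonWeight t).add (hasSum_poissonWeight t)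
  convert! h.natCast_mul_mul_poissonWeight using 1
  · ext n; ring
  · ring

theorem hasSum_sq_sub_mul_poissonWeight (t : ℝ) :
    HasSum (fun n : ℕ ↦ ((n : ℝ) - t) ^ 2 * poissonWeight t n) t := by
  convert! ((hasSum_natCast_sq_mul_poissonWeight t).sub
    ((hasSum_natCast_mul_poissonWeight t).mul_left (2 * t))).add
    ((hasSum_poissonWeight t).mul_left (t ^ 2)) using 1
  · ext n; ring
  · ring

theorem hasSum_sq_div_sub_mul_poissonWeight {u : ℝ} (hu : u ≠ 0) (x : ℝ) :
    HasSum (fun n : ℕ ↦ ((n : ℝ) / u - x) ^ 2 * poissonWeight (u * x) n) (x / u) := by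
  convert! (hasSum_sq_sub_mul_poissonWeight (u * x)).div_const (u ^ 2) using 1
  · ext n; field_simp
  · field_simp

/-- Off the `δ`-ball around `x` the quadratic term is at least `2C`. -/
theorem abs_sub_le_add_mul_sq {f : ℝ → ℝ} {x y ε δ C : ℝ} (hε : 0 ≤ ε) (hδ : 0 < δ)
    (hfy : |f y| ≤ C) (hfx : |f x| ≤ C) (hclose : dist y x < δ → dist (f y) (f x) ≤ ε) :
    |f y - f x| ≤ ε + 2 * C / δ ^ 2 * (y - x) ^ 2 := by
  have hC : 0 ≤ C := (abs_nonneg _).trans hfx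
  rcases lt_or_ge (dist y x) δ with hnear | hfar
  · have hfclose := hclose hnear
    rw [Real.dist_eq] at hfclose
    have hquad : 0 ≤ 2 * C / δ ^ 2 * (y - x) ^ 2 := by positivity
    linarith
  · rw [Real.dist_eq] at hfar
    have hsq : δ ^ 2 ≤ (y - x) ^ 2 := by
      simpa only [sq_abs] using pow_le_pow_left₀ hδ.le hfar 2
    have hquad : 2 * C ≤ 2 * C / δ ^ 2 * (y - x) ^ 2 := by
      rw [div_mul_eq_mul_div, le_div_iff₀ (by positivity)]
      exact mul_le_mul_of_nonneg_left hsq (by positivity)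
    linarith [abs_sub (f y) (f x)]

theorem abs_tsum_mul_sub_le {w g q : ℕ → ℝ} {a ε K V : ℝ} (hw : ∀ k, 0 ≤ w k)
    (hw1 : HasSum w 1) (hq : HasSum (fun k ↦ q k * w k) V)
    (hgq : ∀ k, |g k - a| ≤ ε + K * q k) :
    |∑' k, g k * w k - a| ≤ ε + K * V := by
  have hmajorant : HasSum (fun k ↦ (ε + K * q k) * w k) (ε + K * V) := by
    simpa only [add_mul, mul_assoc, mul_one] using (hw1.mul_left ε).add (hq.mul_left K)
  have hbound : ∀ k, ‖(g k - a) * w k‖ ≤ (ε + K * q k) * w k := fun k ↦ by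
    rw [norm_mul, Real.norm_of_nonneg (hw k)]
    exact mul_le_mul_of_nonneg_right (hgq k) (hw k)
  have hdiff : Summable (fun k ↦ (g k - a) * w k) := .of_norm_bounded hmajorant.summable hbound
  have hsum : HasSum (fun k ↦ g k * w k) (∑' k, (g k - a) * w k + a) := by
    simpa only [sub_mul, mul_one, sub_add_cancel] using hdiff.hasSum.add (hw1.mul_left a)
  rw [hsum.tsum_eq, add_sub_cancel_right]
  exact tsum_of_norm_bounded hmajorant hbound

theorem exp_neg_mul_tsum_eq_tsum_mul_poissonWeight (g : ℕ → ℝ) (t : ℝ) :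
    exp (-t) * ∑' k : ℕ, g k * t ^ k / k.factorial = ∑' k, g k * poissonWeight t k := by
  rw [← tsum_mul_left]
  congr 1 with k
  simp only [poissonWeight]
  ring

/-- For a bounded continuous function `f` on `[0, ∞)` and every `x > 0`,
the Szász-type operator value
`S_u(x) = e^{-u x} · Σ_{k=0}^{∞} f(k/u) (u x)^k / k!` converges to `f x` as `u → ∞`. -/
theorem szasz_operator_tendsto (f : ℝ → ℝ)
    (hf_cont : ContinuousOn f (Set.Ici 0))
    (hf_bdd : ∃ C : ℝ, ∀ x : ℝ, 0 ≤ x → |f x| ≤ C) :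
    ∀ x : ℝ, 0 < x →
      Tendsto (fun u : ℝ =>
          Real.exp (-(u * x)) *
            ∑' k : ℕ, f ((k : ℝ) / u) * (u * x) ^ k / (Nat.factorial k : ℝ))
        atTop (nhds (f x)) := by
  intro x hx
  obtain ⟨C, hC⟩ := hf_bdd
  rw [Metric.tendsto_nhds]
  intro ε hε
  obtain ⟨δ, hδ, hclose⟩ :=
    Metric.continuousAt_iff.mp (hf_cont.continuousAt (Ici_mem_nhds hx)) (ε / 2) (half_pos hε)
  have hsmall : ∀ᶠ u in atTop, 2 * C / δ ^ 2 * (x / u) < ε / 2 := by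
    have : Tendsto (fun u ↦ 2 * C / δ ^ 2 * (x / u)) atTop (nhds 0) := by
      simpa using ((tendsto_const_nhds (x := x)).div_atTop tendsto_id).const_mul (2 * C / δ ^ 2)
    exact this.eventually (gt_mem_nhds (half_pos hε))
  filter_upwards [hsmall, eventually_gt_atTop 0] with u hsmall hu
  rw [Real.dist_eq, exp_neg_mul_tsum_eq_tsum_mul_poissonWeight (fun k ↦ f (k / u))]
  have hpointwise (k : ℕ) : |f (k / u) - f x| ≤ ε / 2 + 2 * C / δ ^ 2 * ((k : ℝ) / u - x) ^ 2 :=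
    abs_sub_le_add_mul_sq (half_pos hε).le hδ (hC _ (by positivity)) (hC x hx.le)
      fun h ↦ (hclose h).le
  calc _ ≤ ε / 2 + 2 * C / δ ^ 2 * (x / u) :=
        abs_tsum_mul_sub_le (poissonWeight_nonneg (by positivity)) (hasSum_poissonWeight _)
          (hasSum_sq_div_sub_mul_poissonWeight hu.ne' x) hpointwise
    _ < ε := by linarith
end

section
/- Let X₁ and X₂ be independent random variables where X₁ is Gamma-distributed with shape v₁ > 0 and rate b₁ > 0 (density b₁^{v₁} x^{v₁−1} e^{−b₁ x}/Γ(v₁) on (0,∞)) and X₂ is Gamma-distributed with shape v₂ > 0 and rate b₂ > 0. Then the product Y = X₁ X₂ has density, for y > 0, f_Y(y) = ((b₁ b₂)^{v₁} y^{v₁ − 1} / (Γ(v₁) Γ(v₂))) · ∫_0^∞ t^{v₂ − v₁ − 1} e^{−t − b₁ b₂ y / t} dt. -/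
/-!
By independence the law of `X₁ X₂` is the multiplicative convolution of the two Gamma laws, whose
density is `z ↦ ∫ f₁ x f₂ (z / x) / |x| dx`; it vanishes for `z ≤ 0` since both factors are
supported on `(0, ∞)`. For `z > 0` the substitution `x = b₂ z / t` turns this integral into the
stated one, which converges because `exp (-c / t)` beats every power of `t` near `0`.
-/

open MeasureTheory ProbabilityTheory Real Set

open scoped ENNReal

theorem Real.lintegral_comp_mul_left (h : ℝ → ℝ≥0∞) {a : ℝ} (ha : a ≠ 0) :
    ∫⁻ y, h (a * y) = ENNReal.ofReal |a⁻¹| * ∫⁻ z, h z := by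
  rw [← smul_eq_mul, ← lintegral_smul_measure, ← Real.map_volume_mul_left ha,
    ← MeasurableEquiv.coe_mulLeft₀ ha, lintegral_map_equiv]
  rfl

theorem lintegral_Ioi_eq_lintegral_Ioi_comp_div (h : ℝ → ℝ≥0∞) {c : ℝ} (hc : 0 < c) :
    ∫⁻ x in Ioi 0, h x = ∫⁻ t in Ioi 0, ENNReal.ofReal (c / t ^ 2) * h (c / t) := by
  have himage : (c / ·) '' Ioi (0 : ℝ) = Ioi 0 := by
    ext z
    exact ⟨fun ⟨t, ht, hz⟩ => hz ▸ div_pos hc ht,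
      fun hz => ⟨c / z, div_pos hc hz, div_div_cancel₀ hc.ne'⟩⟩
  have hderiv : ∀ t ∈ Ioi (0 : ℝ), HasDerivWithinAt (c / ·) (-(c / t ^ 2)) (Ioi 0) t :=
    fun t ht => by
      simpa [div_eq_mul_inv] using ((hasDerivAt_inv (ne_of_gt ht)).const_mul c).hasDerivWithinAt
  have hinj : InjOn (c / ·) (Ioi (0 : ℝ)) := fun a _ b _ h => by
    simpa [div_eq_mul_inv, hc.ne'] using h
  nth_rw 1 [← himage]
  rw [lintegral_image_eq_lintegral_abs_deriv_mul measurableSet_Ioi hderiv hinj]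
  simp_rw [abs_neg, abs_div, abs_of_pos hc, abs_sq]

noncomputable def mulConvDensity (f g : ℝ → ℝ≥0∞) (z : ℝ) : ℝ≥0∞ :=
  ∫⁻ x, ENNReal.ofReal |x⁻¹| * f x * g (z / x)

theorem measurable_mulConvDensity {f g : ℝ → ℝ≥0∞} (hf : Measurable f) (hg : Measurable g) :
    Measurable (mulConvDensity f g) :=
  Measurable.lintegral_prod_left (by fun_prop)

theorem Real.withDensity_mconv_withDensity {f g : ℝ → ℝ≥0∞} (hf : Measurable f)
    (hg : Measurable g) :
    volume.withDensity f ∗ₘ volume.withDensity g = volume.withDensity (mulConvDensity f g) := by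
  refine Measure.ext_of_lintegral _ fun φ hφ ↦ ?_
  have hinner : ∀ᵐ x, ∫⁻ y, f x * g y * φ (x * y) =
      ∫⁻ z, ENNReal.ofReal |x⁻¹| * f x * g (z / x) * φ z := by
    filter_upwards [volume.ae_ne 0] with x hx
    simp_rw [mul_assoc, lintegral_const_mul' _ _ ENNReal.ofReal_ne_top,
      ← Real.lintegral_comp_mul_left _ hx, mul_div_cancel_left₀ _ hx]
  calc ∫⁻ z, φ z ∂(volume.withDensity f ∗ₘ volume.withDensity g)
      = ∫⁻ x, ∫⁻ y, f x * g y * φ (x * y) := by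
        rw [Measure.lintegral_mconv_eq_lintegral_prod hφ, prod_withDensity hf hg,
          lintegral_withDensity_eq_lintegral_mul _ (by fun_prop) (by fun_prop),
          lintegral_prod _ (by fun_prop)]
        rfl
    _ = ∫⁻ x, ∫⁻ z, ENNReal.ofReal |x⁻¹| * f x * g (z / x) * φ z := lintegral_congr_ae hinner
    _ = ∫⁻ z, mulConvDensity f g z * φ z := by
        rw [lintegral_lintegral_swap (by fun_prop)]
        refine lintegral_congr fun z => ?_
        rw [mulConvDensity, lintegral_mul_const _ (by fun_prop)]
    _ = ∫⁻ z, φ z ∂(volume.withDensity (mulConvDensity f g)) :=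
        (lintegral_withDensity_eq_lintegral_mul _ (measurable_mulConvDensity hf hg) hφ).symm

theorem mulConvDensity_ofReal_indicator_Ioi (f g : ℝ → ℝ) (z : ℝ) :
    mulConvDensity (fun x => ENNReal.ofReal ((Ioi 0).indicator f x))
        (fun x => ENNReal.ofReal ((Ioi 0).indicator g x)) z =
      (Ioi 0).indicator (fun z => ∫⁻ x in Ioi 0,
        ENNReal.ofReal x⁻¹ * ENNReal.ofReal (f x) * ENNReal.ofReal (g (z / x))) z := by
  rcases lt_or_ge 0 z with hz | hz
  · rw [indicator_of_mem (mem_Ioi.2 hz), mulConvDensity, ← lintegral_indicator measurableSet_Ioi]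
    refine lintegral_congr fun x => ?_
    rcases lt_or_ge 0 x with hx | hx
    · simp [hx, abs_of_pos, div_pos hz hx]
    · simp [indicator_of_notMem (notMem_Ioi.2 hx)]
  · rw [indicator_of_notMem (notMem_Ioi.2 hz), mulConvDensity, ← lintegral_zero]
    refine lintegral_congr fun x => ?_
    rcases lt_or_ge 0 x with hx | hx
    · simp [indicator_of_notMem (notMem_Ioi.2 (div_nonpos_of_nonpos_of_nonneg hz hx.le))]
    · simp [indicator_of_notMem (notMem_Ioi.2 hx)]

theorem integrableOn_rpow_mul_exp_neg_sub_div (a : ℝ) {c : ℝ} (hc : 0 < c) :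
    IntegrableOn (fun t => t ^ a * exp (-t - c / t)) (Ioi 0) := by
  set n : ℕ := ⌈-a⌉₊
  -- `exp (-c/t) ≤ n! t^n / c^n` kills the singularity at `0`, leaving a Gamma integrand.
  have hbound : ∀ t : ℝ, 0 < t → exp (-(c / t)) ≤ n.factorial / c ^ n * t ^ n := fun t ht => by
    calc exp (-(c / t)) = (exp (c / t))⁻¹ := exp_neg _
      _ ≤ ((c / t) ^ n / n.factorial)⁻¹ :=
          inv_anti₀ (by positivity) (pow_div_factorial_le_exp _ (by positivity) n)
      _ = n.factorial / c ^ n * t ^ n := by rw [div_pow]; field_simp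
  refine Integrable.mono' ((GammaIntegral_convergent (s := a + n + 1)
      (by linarith [Nat.le_ceil (-a)])).const_mul (n.factorial / c ^ n)) ?_ ?_
  · exact (ContinuousOn.mul (fun t ht => (continuousAt_rpow_const t a
      (Or.inl (ne_of_gt ht))).continuousWithinAt) (by fun_prop (disch := intro t ht; exact ne_of_gt ht)) :
      ContinuousOn _ (Ioi (0 : ℝ))).aestronglyMeasurable measurableSet_Ioi
  · filter_upwards [ae_restrict_mem measurableSet_Ioi] with t (ht : 0 < t)
    rw [norm_of_nonneg (by positivity), sub_eq_add_neg, exp_add, add_sub_cancel_right,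
      rpow_add ht, rpow_natCast]
    calc t ^ a * (exp (-t) * exp (-(c / t)))
        ≤ t ^ a * (exp (-t) * (n.factorial / c ^ n * t ^ n)) := by gcongr; exact hbound t ht
      _ = n.factorial / c ^ n * (exp (-t) * (t ^ a * t ^ n)) := by ring

theorem gamma_product_integrand_eq (v₁ v₂ : ℝ) {b₁ b₂ z t : ℝ} (hb₁ : 0 < b₁) (hb₂ : 0 < b₂)
    (hz : 0 < z) (ht : 0 < t) :
    b₂ * z / t ^ 2 * ((b₂ * z / t)⁻¹ *
      (b₁ ^ v₁ * (b₂ * z / t) ^ (v₁ - 1) * exp (-(b₁ * (b₂ * z / t))) / Gamma v₁) *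
      (b₂ ^ v₂ * (z / (b₂ * z / t)) ^ (v₂ - 1) * exp (-(b₂ * (z / (b₂ * z / t)))) / Gamma v₂)) =
    (b₁ * b₂) ^ v₁ * z ^ (v₁ - 1) / (Gamma v₁ * Gamma v₂) *
      (t ^ (v₂ - v₁ - 1) * exp (-t - b₁ * b₂ * z / t)) := by
  have hzt : z / (b₂ * z / t) = t / b₂ := by field_simp
  have hexp : exp (-t - b₁ * b₂ * z / t) =
      exp (-(b₁ * (b₂ * z / t))) * exp (-(b₂ * (t / b₂))) := by
    rw [← exp_add]; congr 1; field_simp; ring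
  rw [hzt, hexp, div_rpow (by positivity) ht.le, div_rpow ht.le hb₂.le, mul_rpow hb₁.le hb₂.le,
    mul_rpow hb₂.le hz.le]
  simp only [rpow_sub_one ht.ne', rpow_sub_one hb₂.ne']
  rw [rpow_sub ht]
  field_simp

theorem lintegral_Ioi_inv_mul_gamma_mul_gamma {v₁ v₂ b₁ b₂ : ℝ} (hv₁ : 0 < v₁) (hv₂ : 0 < v₂)
    (hb₁ : 0 < b₁) (hb₂ : 0 < b₂) {z : ℝ} (hz : 0 < z) :
    ∫⁻ x in Ioi 0, ENNReal.ofReal x⁻¹ *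
        ENNReal.ofReal (b₁ ^ v₁ * x ^ (v₁ - 1) * exp (-(b₁ * x)) / Gamma v₁) *
        ENNReal.ofReal (b₂ ^ v₂ * (z / x) ^ (v₂ - 1) * exp (-(b₂ * (z / x))) / Gamma v₂) =
      ENNReal.ofReal ((b₁ * b₂) ^ v₁ * z ^ (v₁ - 1) / (Gamma v₁ * Gamma v₂) *
        ∫ t in Ioi 0, t ^ (v₂ - v₁ - 1) * exp (-t - b₁ * b₂ * z / t)) := by
  have hΓ₁ := Gamma_pos_of_pos hv₁
  have hΓ₂ := Gamma_pos_of_pos hv₂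
  set C := (b₁ * b₂) ^ v₁ * z ^ (v₁ - 1) / (Gamma v₁ * Gamma v₂)
  have hk := integrableOn_rpow_mul_exp_neg_sub_div (v₂ - v₁ - 1) (by positivity : 0 < b₁ * b₂ * z)
  rw [lintegral_Ioi_eq_lintegral_Ioi_comp_div _ (mul_pos hb₂ hz), ← integral_const_mul,
    ofReal_integral_eq_lintegral_ofReal (hk.const_mul C)]
  · refine setLIntegral_congr_fun measurableSet_Ioi fun t (ht : 0 < t) => ?_
    rw [← gamma_product_integrand_eq v₁ v₂ hb₁ hb₂ hz ht, ← ENNReal.ofReal_mul (by positivity), ← ENNReal.ofReal_mul (by positivity),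
      ← ENNReal.ofReal_mul (by positivity)]
  · filter_upwards [ae_restrict_mem measurableSet_Ioi] with t (ht : 0 < t)
    positivity

/-- If `X₁ ~ Gamma(v₁, b₁)` and `X₂ ~ Gamma(v₂, b₂)` are independent, then the
product `Y = X₁ X₂` has density
`f_Y(y) = ((b₁ b₂)^{v₁} y^{v₁-1} / (Γ(v₁) Γ(v₂))) ∫_0^∞ t^{v₂-v₁-1} e^{-t - b₁ b₂ y / t} dt`
for `y > 0`. -/
theorem gamma_product_density {Ω : Type*} [MeasurableSpace Ω]
    (μ : Measure Ω) [IsProbabilityMeasure μ]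
    (X₁ X₂ : Ω → ℝ) (hX₁ : Measurable X₁) (hX₂ : Measurable X₂)
    (hindep : IndepFun X₁ X₂ μ)
    (v₁ v₂ b₁ b₂ : ℝ) (hv₁ : 0 < v₁) (hv₂ : 0 < v₂) (hb₁ : 0 < b₁) (hb₂ : 0 < b₂)
    (h₁ : Measure.map X₁ μ = volume.withDensity (fun x =>
      ENNReal.ofReal (Set.indicator (Set.Ioi 0)
        (fun x => b₁ ^ v₁ * x ^ (v₁ - 1) * Real.exp (-(b₁ * x)) / Real.Gamma v₁) x)))
    (h₂ : Measure.map X₂ μ = volume.withDensity (fun x =>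
      ENNReal.ofReal (Set.indicator (Set.Ioi 0)
        (fun x => b₂ ^ v₂ * x ^ (v₂ - 1) * Real.exp (-(b₂ * x)) / Real.Gamma v₂) x))) :
    Measure.map (fun ω => X₁ ω * X₂ ω) μ = volume.withDensity (fun y =>
      ENNReal.ofReal (Set.indicator (Set.Ioi 0)
        (fun y => (b₁ * b₂) ^ v₁ * y ^ (v₁ - 1) / (Real.Gamma v₁ * Real.Gamma v₂) *
          ∫ t in Set.Ioi (0:ℝ), t ^ (v₂ - v₁ - 1) * Real.exp (-t - b₁ * b₂ * y / t)) y)) := by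
  have hmeas : ∀ f : ℝ → ℝ, Measurable f →
      Measurable fun x => ENNReal.ofReal ((Ioi 0).indicator f x) := fun f hf =>
    ENNReal.measurable_ofReal.comp (hf.indicator measurableSet_Ioi)
  rw [show (fun ω => X₁ ω * X₂ ω) = X₁ * X₂ from rfl, hindep.map_mul_eq_map_mconv_map hX₁ hX₂,
    h₁, h₂, Real.withDensity_mconv_withDensity (hmeas _ (by fun_prop)) (hmeas _ (by fun_prop))]
  congr 1
  ext z
  rw [mulConvDensity_ofReal_indicator_Ioi]
  rcases lt_or_ge 0 z with hz | hz
  · rw [indicator_of_mem (mem_Ioi.2 hz), indicator_of_mem (mem_Ioi.2 hz),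
      lintegral_Ioi_inv_mul_gamma_mul_gamma hv₁ hv₂ hb₁ hb₂ hz]
  · rw [indicator_of_notMem (notMem_Ioi.2 hz), indicator_of_notMem (notMem_Ioi.2 hz),
      ENNReal.ofReal_zero]
end

section
/- Let A > 0, z > 0, 0 < c < 1, and let n be a natural number. Then ∫_0^z x^n e^{−A (x − c z)²} dx = (1/2) Σ_{k=0}^{n} C(n, k) (c z)^{n − k} A^{−(k+1)/2} · [ γ((k+1)/2, A (1 − c)² z²) + (−1)^k γ((k+1)/2, A c² z²) ], where C(n,k) is the binomial coefficient and γ(s, y) = ∫_0^y t^{s−1} e^{−t} dt is the lower incomplete Gamma function. -/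
/-!
Shifting `x = u + c z` turns the integral into `∫_{-cz}^{(1-c)z} (u + cz)^n e^{-Au²} du`; the
binomial theorem reduces it to the moments `∫ u^k e^{-Au²}`, which on `[0, b]` become
`½ A^{-(k+1)/2} γ((k+1)/2, A b²)` under the substitution `t = A u²`, while the part over
`[-cz, 0]` is reflected to `[0, cz]` at the cost of a sign `(-1)^k`.
-/

open Real

/-- The lower incomplete Gamma function `γ(s, y) = ∫_0^y t^{s-1} e^{-t} dt`. -/
noncomputable def lowerIncGamma (s y : ℝ) : ℝ :=
  ∫ t in (0:ℝ)..y, t ^ (s - 1) * Real.exp (-t)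

open MeasureTheory Set intervalIntegral

lemma mul_sq_rpow_sub_one_mul_two_mul {A u : ℝ} (hA : 0 < A) (hu : 0 < u) (k : ℕ) :
    (A * u ^ 2) ^ (((k : ℝ) + 1) / 2 - 1) * (2 * A * u) = 2 * A ^ (((k : ℝ) + 1) / 2) * u ^ k := by
  have hsq : (u ^ 2) ^ (((k : ℝ) + 1) / 2) = u ^ k * u := by
    rw [← rpow_natCast u 2, ← rpow_mul hu.le, ← pow_succ, ← rpow_natCast]
    congr 1
    push_cast
    ring
  rw [rpow_sub_one (by positivity), mul_rpow hA.le (by positivity), hsq]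
  field_simp

theorem integral_pow_mul_exp_neg_mul_sq {A b : ℝ} (hA : 0 < A) (k : ℕ) (hb : 0 ≤ b) :
    ∫ u in (0:ℝ)..b, u ^ k * exp (-(A * u ^ 2)) =
      (1 / 2) * A ^ (-(((k : ℝ) + 1) / 2)) * lowerIncGamma (((k : ℝ) + 1) / 2) (A * b ^ 2) := by
  set s : ℝ := ((k : ℝ) + 1) / 2
  have hsubst : lowerIncGamma s (A * b ^ 2) =
      ∫ u in (0:ℝ)..b, (A * u ^ 2) ^ (s - 1) * exp (-(A * u ^ 2)) * (2 * A * u) := by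
    have hderiv (u : ℝ) : HasDerivAt (fun u : ℝ ↦ A * u ^ 2) (2 * A * u) u := by
      simpa [mul_comm, mul_left_comm] using (hasDerivAt_pow 2 u).const_mul A
    -- the monotone form of the substitution needs no integrability of `t ^ (s - 1)` near `0`
    have := integral_comp_mul_deriv_of_deriv_nonneg (a := 0) (b := b)
      (g := fun t ↦ t ^ (s - 1) * exp (-t)) (by fun_prop) (fun u _ ↦ hderiv u)
      (fun u hu ↦ mul_nonneg (by positivity) (min_eq_left hb ▸ hu.1).le)
    simpa [lowerIncGamma] using this.symm
  have hjacobian : (∫ u in (0:ℝ)..b, (A * u ^ 2) ^ (s - 1) * exp (-(A * u ^ 2)) * (2 * A * u)) =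
      2 * A ^ s * ∫ u in (0:ℝ)..b, u ^ k * exp (-(A * u ^ 2)) := by
    rw [← intervalIntegral.integral_const_mul]
    refine integral_congr_ae (ae_of_all _ fun u hu ↦ ?_)
    rw [uIoc_of_le hb] at hu
    rw [mul_right_comm, mul_sq_rpow_sub_one_mul_two_mul hA hu.1]
    ring
  rw [hsubst, hjacobian, rpow_neg hA.le, ← mul_assoc, ← mul_assoc]
  field_simp

theorem integral_pow_mul_exp_neg_mul_sq_of_neg_le {A a b : ℝ} (hA : 0 < A) (k : ℕ)
    (ha : 0 ≤ a) (hb : 0 ≤ b) :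
    ∫ u in (-a)..b, u ^ k * exp (-(A * u ^ 2)) =
      (1 / 2) * A ^ (-(((k : ℝ) + 1) / 2)) *
        (lowerIncGamma (((k : ℝ) + 1) / 2) (A * b ^ 2) +
          (-1) ^ k * lowerIncGamma (((k : ℝ) + 1) / 2) (A * a ^ 2)) := by
  have hint (x y : ℝ) : IntervalIntegrable (fun u : ℝ ↦ u ^ k * exp (-(A * u ^ 2))) volume x y :=
    (by fun_prop : Continuous fun u : ℝ ↦ u ^ k * exp (-(A * u ^ 2))).intervalIntegrable x y
  have hreflect : ∫ u in (-a)..0, u ^ k * exp (-(A * u ^ 2)) =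
      (-1) ^ k * ∫ u in (0:ℝ)..a, u ^ k * exp (-(A * u ^ 2)) := by
    rw [← neg_zero, ← integral_comp_neg, neg_zero, ← intervalIntegral.integral_const_mul]
    congr 1 with u
    rw [neg_sq, neg_pow]
    ring
  rw [← integral_add_adjacent_intervals (hint _ 0) (hint 0 _), hreflect,
    integral_pow_mul_exp_neg_mul_sq hA k ha, integral_pow_mul_exp_neg_mul_sq hA k hb]
  ring

theorem integral_add_pow_mul_eq_sum {w : ℝ → ℝ} (hw : Continuous w) (a b d : ℝ) (n : ℕ) :
    ∫ u in a..b, (u + d) ^ n * w u =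
      ∑ k ∈ Finset.range (n + 1), (n.choose k : ℝ) * d ^ (n - k) * ∫ u in a..b, u ^ k * w u := by
  simp_rw [add_pow, Finset.sum_mul]
  rw [integral_finsetSum fun k _ ↦ (by fun_prop : Continuous _).intervalIntegrable a b]
  refine Finset.sum_congr rfl fun k _ ↦ ?_
  rw [← intervalIntegral.integral_const_mul]
  congr 1 with u
  ring

/-- For `A > 0`, `z > 0`, `0 < c < 1` and `n : ℕ`,
`∫_0^z x^n e^{-A (x - c z)²} dx
  = (1/2) Σ_{k=0}^{n} C(n,k) (c z)^{n-k} A^{-(k+1)/2}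
      [γ((k+1)/2, A (1-c)² z²) + (-1)^k γ((k+1)/2, A c² z²)]`. -/
theorem integral_pow_mul_exp_neg_shifted_sq (A z c : ℝ) (hA : 0 < A) (hz : 0 < z)
    (hc0 : 0 < c) (hc1 : c < 1) (n : ℕ) :
    ∫ x in (0:ℝ)..z, x ^ n * Real.exp (-(A * (x - c * z) ^ 2)) =
      (1 / 2) * ∑ k ∈ Finset.range (n + 1),
        (n.choose k : ℝ) * (c * z) ^ (n - k) * A ^ (-(((k : ℝ) + 1) / 2)) *
          (lowerIncGamma (((k : ℝ) + 1) / 2) (A * (1 - c) ^ 2 * z ^ 2) +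
            (-1 : ℝ) ^ k * lowerIncGamma (((k : ℝ) + 1) / 2) (A * c ^ 2 * z ^ 2)) := by
  have hshift : ∫ x in (0:ℝ)..z, x ^ n * exp (-(A * (x - c * z) ^ 2)) =
      ∫ u in (-(c * z))..((1 - c) * z), (u + c * z) ^ n * exp (-(A * u ^ 2)) := by
    rw [show -(c * z) = 0 - c * z by ring, show (1 - c) * z = z - c * z by ring,
      ← integral_comp_sub_right]
    simp only [sub_add_cancel]
  rw [hshift, integral_add_pow_mul_eq_sum (by fun_prop), Finset.mul_sum]
  refine Finset.sum_congr rfl fun k _ ↦ ?_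
  rw [integral_pow_mul_exp_neg_mul_sq_of_neg_le hA k (by positivity)
    (mul_nonneg (by linarith) hz.le), show A * ((1 - c) * z) ^ 2 = A * (1 - c) ^ 2 * z ^ 2 by ring,
    show A * (c * z) ^ 2 = A * c ^ 2 * z ^ 2 by ring]
  ring
end

section
/- Let d > 0 and r > 0 with d ≥ r, let θ be a random variable uniformly distributed on [0, 2π], and set L = √( d² + r² + 2 d r cos θ ). Then for every l with d − r ≤ l ≤ d + r, the conditional distribution of the base-station-to-IRS distance satisfies P( L ≤ l ) = 1/2 + (1/π) arcsin( (l² − r² − d²) / (2 d r) ). Consequently, on the open interval (d − r, d + r), the cumulative distribution function l ↦ P(L ≤ l) is differentiable with derivative (density) f_L(l) = ( l / (π d r) ) / √( 1 − ( (l² − r² − d²)/(2 d r) )² ). -/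
/-!
`L ≤ l` iff `cos θ ≤ c` with `c = (l² - r² - d²) / (2 d r)`, and `d - r ≤ l ≤ d + r` puts `c` in
`[-1, 1]`. On `[0, 2π]` the set `{cos ≤ c}` is the arc `[arccos c, 2π - arccos c]`, whose uniform
mass is `1 - arccos c / π = 1/2 + arcsin c / π`. On the open interval `c ∈ (-1, 1)`, where `arcsin`
is differentiable, and the density follows from the chain rule.
-/
open MeasureTheory Real Set

namespace Real

lemma cos_le_iff_arccos_le {c x : ℝ} (hc₁ : -1 ≤ c) (hc₂ : c ≤ 1) (hx₀ : 0 ≤ x) (hxπ : x ≤ π) :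
    cos x ≤ c ↔ arccos c ≤ x := by
  conv_lhs => rw [← cos_arccos hc₁ hc₂]
  exact strictAntiOn_cos.le_iff_ge ⟨hx₀, hxπ⟩ ⟨arccos_nonneg c, arccos_le_pi c⟩

lemma setOf_cos_le_inter_Icc {c : ℝ} (hc₁ : -1 ≤ c) (hc₂ : c ≤ 1) :
    {x | cos x ≤ c} ∩ Icc 0 (2 * π) = Icc (arccos c) (2 * π - arccos c) := by
  ext x
  have harccos_le := arccos_le_pi c
  have harccos_nonneg := arccos_nonneg c
  simp only [mem_inter_iff, mem_ofPred_eq, mem_Icc]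
  rcases le_total x π with hxπ | hπx
  · have hiff := cos_le_iff_arccos_le hc₁ hc₂ (x := x)
    constructor
    · rintro ⟨h, hx₀, -⟩
      exact ⟨(hiff hx₀ hxπ).1 h, by linarith⟩
    · rintro ⟨h, -⟩
      exact ⟨(hiff (by linarith) hxπ).2 h, by linarith, by linarith⟩
  · rw [← cos_two_pi_sub]
    have hiff := cos_le_iff_arccos_le hc₁ hc₂ (x := 2 * π - x)
    constructor
    · rintro ⟨h, -, hx₂π⟩
      exact ⟨by linarith, by linarith [(hiff (by linarith) (by linarith)).1 h]⟩
    · rintro ⟨-, h⟩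
      exact ⟨(hiff (by linarith) (by linarith)).2 (by linarith), by linarith, by linarith⟩

end Real

lemma uniform_measure_setOf_cos_le {c : ℝ} (hc₁ : -1 ≤ c) (hc₂ : c ≤ 1) :
    (((ENNReal.ofReal (2 * π))⁻¹ • volume.restrict (Icc 0 (2 * π))) {x | cos x ≤ c}).toReal =
      1 / 2 + (1 / π) * arcsin c := by
  have hmeas : MeasurableSet {x | cos x ≤ c} := measurableSet_le measurable_cos measurable_const
  have harccos_le := arccos_le_pi c
  rw [Measure.smul_apply, Measure.restrict_apply hmeas, setOf_cos_le_inter_Icc hc₁ hc₂,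
    volume_Icc, smul_eq_mul, ENNReal.toReal_mul, ENNReal.toReal_inv,
    ENNReal.toReal_ofReal two_pi_pos.le, ENNReal.toReal_ofReal (by linarith),
    arccos_eq_pi_div_two_sub_arcsin]
  field_simp
  ring

section LawOfCosines

variable {d r l : ℝ}

lemma sqrt_law_of_cosines_le_iff {t : ℝ} (hdr : 0 < d * r) (hl : 0 ≤ l) :
    √(d ^ 2 + r ^ 2 + 2 * d * r * cos t) ≤ l ↔ cos t ≤ (l ^ 2 - r ^ 2 - d ^ 2) / (2 * d * r) := by
  rw [sqrt_le_left hl, le_div_iff₀ (by linarith)]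
  constructor <;> intro h <;> linarith

lemma law_of_cosines_ratio_mem_Icc (hr : 0 < r) (hrd : r ≤ d) (hl : l ∈ Icc (d - r) (d + r)) :
    (l ^ 2 - r ^ 2 - d ^ 2) / (2 * d * r) ∈ Icc (-1) 1 := by
  have hdr : 0 < 2 * d * r := by nlinarith
  rw [mem_Icc, le_div_iff₀ hdr, div_le_one hdr]
  constructor <;> nlinarith [hl.1, hl.2]

lemma law_of_cosines_ratio_mem_Ioo (hr : 0 < r) (hrd : r ≤ d) (hl : l ∈ Ioo (d - r) (d + r)) :
    (l ^ 2 - r ^ 2 - d ^ 2) / (2 * d * r) ∈ Ioo (-1) 1 := by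
  have hdr : 0 < 2 * d * r := by nlinarith
  rw [mem_Ioo, lt_div_iff₀ hdr, div_lt_one hdr]
  constructor <;> nlinarith [hl.1, hl.2]

lemma hasDerivAt_arcsin_law_of_cosines_ratio
    (hl : (l ^ 2 - r ^ 2 - d ^ 2) / (2 * d * r) ∈ Ioo (-1) 1) :
    HasDerivAt (fun l => 1 / 2 + (1 / π) * arcsin ((l ^ 2 - r ^ 2 - d ^ 2) / (2 * d * r)))
      ((l / (π * d * r)) / √(1 - ((l ^ 2 - r ^ 2 - d ^ 2) / (2 * d * r)) ^ 2)) l := by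
  have hratio :
      HasDerivAt (fun l => (l ^ 2 - r ^ 2 - d ^ 2) / (2 * d * r)) (2 * l / (2 * d * r)) l := by
    simpa using (((hasDerivAt_pow 2 l).sub_const (r ^ 2)).sub_const (d ^ 2)).div_const (2 * d * r)
  refine ((((hasDerivAt_arcsin hl.1.ne' hl.2.ne).comp l hratio).const_mul (1 / π)).const_add
    (1 / 2)).congr_deriv ?_
  field_simp

lemma measure_sqrt_law_of_cosines_le {Ω : Type*} [MeasurableSpace Ω] {μ : Measure Ω}
    {θ : Ω → ℝ} (hθ : Measurable θ)
    (hunif : μ.map θ = (ENNReal.ofReal (2 * π))⁻¹ • volume.restrict (Icc 0 (2 * π)))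
    (hr : 0 < r) (hrd : r ≤ d) (hl : l ∈ Icc (d - r) (d + r)) :
    (μ {ω | √(d ^ 2 + r ^ 2 + 2 * d * r * cos (θ ω)) ≤ l}).toReal =
      1 / 2 + (1 / π) * arcsin ((l ^ 2 - r ^ 2 - d ^ 2) / (2 * d * r)) := by
  obtain ⟨hc₁, hc₂⟩ := law_of_cosines_ratio_mem_Icc hr hrd hl
  have hpreimage : {ω | √(d ^ 2 + r ^ 2 + 2 * d * r * cos (θ ω)) ≤ l} =
      θ ⁻¹' {x | cos x ≤ (l ^ 2 - r ^ 2 - d ^ 2) / (2 * d * r)} := by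
    ext ω
    exact sqrt_law_of_cosines_le_iff (by nlinarith) (by linarith [hl.1])
  rw [hpreimage, ← Measure.map_apply hθ (measurableSet_le measurable_cos measurable_const), hunif]
  exact uniform_measure_setOf_cos_le hc₁ hc₂

end LawOfCosines

theorem bs_irs_distance_distribution_general {Ω : Type*} [MeasurableSpace Ω]
    (μ : Measure Ω)
    (d r : ℝ) (hr : 0 < r) (hrd : r ≤ d)
    (θ : Ω → ℝ) (hθ : Measurable θ)
    (hunif : Measure.map θ μ =
      (ENNReal.ofReal (2 * Real.pi))⁻¹ • volume.restrict (Set.Icc 0 (2 * Real.pi))) :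
    (∀ l : ℝ, d - r ≤ l → l ≤ d + r →
        (μ {ω | Real.sqrt (d ^ 2 + r ^ 2 + 2 * d * r * Real.cos (θ ω)) ≤ l}).toReal =
          1 / 2 + (1 / Real.pi) * Real.arcsin ((l ^ 2 - r ^ 2 - d ^ 2) / (2 * d * r)))
    ∧ (∀ l ∈ Set.Ioo (d - r) (d + r),
        HasDerivAt
          (fun l : ℝ =>
            (μ {ω | Real.sqrt (d ^ 2 + r ^ 2 + 2 * d * r * Real.cos (θ ω)) ≤ l}).toReal)
          ((l / (Real.pi * d * r)) /
            Real.sqrt (1 - ((l ^ 2 - r ^ 2 - d ^ 2) / (2 * d * r)) ^ 2)) l) := by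
  have hcdf {l : ℝ} := measure_sqrt_law_of_cosines_le (l := l) hθ hunif hr hrd
  refine ⟨fun l h₁ h₂ ↦ hcdf ⟨h₁, h₂⟩, fun l hl ↦ ?_⟩
  refine (hasDerivAt_arcsin_law_of_cosines_ratio
    (law_of_cosines_ratio_mem_Ioo hr hrd hl)).congr_of_eventuallyEq ?_
  filter_upwards [Ioo_mem_nhds hl.1 hl.2] with x hx
  exact hcdf (Ioo_subset_Icc_self hx)

/-- Law of cosines distance distribution: let `d ≥ r > 0`, let `θ` be uniformly
distributed on `[0, 2π]`, and `L = √(d² + r² + 2 d r cos θ)`.  Then for `d - r ≤ l ≤ d + r`,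
`P(L ≤ l) = 1/2 + (1/π) arcsin((l² - r² - d²)/(2 d r))`, and on `(d - r, d + r)` the CDF of `L`
is differentiable with derivative `f_L(l) = (l/(π d r)) / √(1 - ((l² - r² - d²)/(2 d r))²)`. -/
theorem bs_irs_distance_distribution {Ω : Type*} [MeasurableSpace Ω]
    (μ : Measure Ω) [IsProbabilityMeasure μ]
    (d r : ℝ) (hd : 0 < d) (hr : 0 < r) (hrd : r ≤ d)
    (θ : Ω → ℝ) (hθ : Measurable θ)
    (hunif : Measure.map θ μ =
      (ENNReal.ofReal (2 * Real.pi))⁻¹ • volume.restrict (Set.Icc 0 (2 * Real.pi))) :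
    (∀ l : ℝ, d - r ≤ l → l ≤ d + r →
        (μ {ω | Real.sqrt (d ^ 2 + r ^ 2 + 2 * d * r * Real.cos (θ ω)) ≤ l}).toReal =
          1 / 2 + (1 / Real.pi) * Real.arcsin ((l ^ 2 - r ^ 2 - d ^ 2) / (2 * d * r)))
    ∧ (∀ l ∈ Set.Ioo (d - r) (d + r),
        HasDerivAt
          (fun l : ℝ =>
            (μ {ω | Real.sqrt (d ^ 2 + r ^ 2 + 2 * d * r * Real.cos (θ ω)) ≤ l}).toReal)
          ((l / (Real.pi * d * r)) /
            Real.sqrt (1 - ((l ^ 2 - r ^ 2 - d ^ 2) / (2 * d * r)) ^ 2)) l) :=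
  bs_irs_distance_distribution_general μ d r hr hrd θ hθ hunif
end
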